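/- Let W and V be r×r real symmetric positive definite matrices. Let U ∈ St(r,p₁) with orthonormal completion U⊥, and V₀ ∈ St(r,p₂) with orthonormal completion V₀⊥. Let P₁, P₂ ∈ ℝ^{r×r} be invertible and set L := UP₁, R := V₀P₂. For S ∈ ℝ^{r×r}, D₁ ∈ ℝ^{(p₁−r)×r}, D₂ ∈ ℝ^{(p₂−r)×r}, define θ_L := (U S P₂ W⁻¹ P₂ᵀ + U⊥D₁) P₂⁻ᵀ and θ_R := (V₀ Sᵀ P₁ V⁻¹ P₁ᵀ + V₀⊥D₂) P₁⁻ᵀ. Set g := tr(W θ_Lᵀθ_L) + tr(V θ_Rᵀθ_R), γ := min(λmin(P₂ W⁻¹ P₂ᵀ), λmin(P₁ V⁻¹ P₁ᵀ)) and Γ := max(λmax(P₂ W⁻¹ P₂ᵀ), λmax(P₁ V⁻¹ P₁ᵀ)). Then γ·g ≤ ‖L θ_Rᵀ + θ_L Rᵀ‖_F² ≤ 2Γ·g. -/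

import Mathlib

/-!
Put `A = P₂ W⁻¹ P₂ᵀ` and `B = P₁ V⁻¹ P₁ᵀ`. Then `θ_L P₂ᵀ = U S A + U⊥ D₁`, and
`L θ_Rᵀ + θ_L Rᵀ = U (B S + S A) V₀ᵀ + U D₂ᵀ V₀⊥ᵀ + U⊥ D₁ V₀ᵀ`, so by orthonormality
`‖L θ_Rᵀ + θ_L Rᵀ‖² = ‖B S + S A‖² + ‖D₁‖² + ‖D₂‖²` while
`g = tr(S A Sᵀ) + tr(Sᵀ B S) + tr(D₁ A⁻¹ D₁ᵀ) + tr(D₂ B⁻¹ D₂ᵀ)`.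
The eigenvalue bounds are the Loewner bounds `γ ≤ A, B ≤ Γ`, and since `A` commutes with
`A - γ` and `Γ - A` they give `γ A ≤ A² ≤ Γ A`; conjugating and taking traces compares every
term of `g` with the matching squared norm. The cross term `2 tr(Sᵀ B S A)` of `‖B S + S A‖²`
is nonnegative for the lower bound, and `‖B S + S A‖² ≤ 2‖B S‖² + 2‖S A‖²` gives the factor
`2` in the upper one.
-/

open Matrix

/-- The smallest eigenvalue of a (Hermitian) real matrix; junk value `0` otherwise. -/
noncomputable def eigMin {n : ℕ} (M : Matrix (Fin n) (Fin n) ℝ) : ℝ := by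
  classical exact if h : M.IsHermitian then ⨅ i, h.eigenvalues i else 0

/-- The largest eigenvalue of a (Hermitian) real matrix; junk value `0` otherwise. -/
noncomputable def eigMax {n : ℕ} (M : Matrix (Fin n) (Fin n) ℝ) : ℝ := by
  classical exact if h : M.IsHermitian then ⨆ i, h.eigenvalues i else 0

/-- The squared Frobenius norm `‖A‖_F² = tr(AᵀA)`. -/
noncomputable def frobSq {m n : ℕ} (A : Matrix (Fin m) (Fin n) ℝ) : ℝ :=
  Matrix.trace (Aᵀ * A)

open scoped MatrixOrder

section CStarOrder

variable {A : Type*} [Ring A] [PartialOrder A] [StarRing A] [StarOrderedRing A]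
  [TopologicalSpace A] [Algebra ℝ A] [ContinuousFunctionalCalculus ℝ A IsSelfAdjoint]
  [NonnegSpectrumClass ℝ A] {a : A} {c : ℝ}

lemma smul_le_mul_self_of_algebraMap_le (ha : 0 ≤ a) (hc : algebraMap ℝ A c ≤ a) :
    c • a ≤ a * a := by
  have h := Commute.mul_nonneg (sub_nonneg.2 hc) ha
    ((Commute.refl a).sub_left (Algebra.commute_algebraMap_left c a))
  rwa [sub_mul, ← Algebra.smul_def, sub_nonneg] at h

lemma mul_self_le_smul_of_le_algebraMap (ha : 0 ≤ a) (hc : a ≤ algebraMap ℝ A c) :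
    a * a ≤ c • a := by
  have h := Commute.mul_nonneg (sub_nonneg.2 hc) ha
    ((Algebra.commute_algebraMap_left c a).sub_left (Commute.refl a))
  rwa [sub_mul, ← Algebra.smul_def, sub_nonneg] at h

end CStarOrder

namespace Matrix

lemma transpose_eq_of_nonneg {n : Type*} {A : Matrix n n ℝ} (hA : 0 ≤ A) : Aᵀ = A := by
  simpa [conjTranspose_eq_transpose_of_trivial] using hA.posSemidef.isHermitian.eq

variable {m n : Type*} [Fintype m] [Fintype n]

lemma mul_mul_transpose_nonneg [DecidableEq m] {M : Matrix n n ℝ} (hM : 0 ≤ M)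
    (X : Matrix m n ℝ) : 0 ≤ X * M * Xᵀ := by
  simpa [conjTranspose_eq_transpose_of_trivial] using
    (hM.posSemidef.mul_mul_conjTranspose_same X).nonneg

lemma trace_mul_mul_transpose_nonneg [DecidableEq m] {M : Matrix n n ℝ} (hM : 0 ≤ M)
    (X : Matrix m n ℝ) : 0 ≤ trace (X * M * Xᵀ) :=
  (mul_mul_transpose_nonneg hM X).posSemidef.trace_nonneg

lemma trace_mul_mul_transpose_mono [DecidableEq m] [DecidableEq n] {M N : Matrix n n ℝ} (h : M ≤ N)
    (X : Matrix m n ℝ) : trace (X * M * Xᵀ) ≤ trace (X * N * Xᵀ) := by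
  have := trace_mul_mul_transpose_nonneg (sub_nonneg.2 h) X
  rwa [Matrix.mul_sub, Matrix.sub_mul, trace_sub, sub_nonneg] at this

lemma trace_transpose_mul_comm (X Y : Matrix m n ℝ) : trace (Yᵀ * X) = trace (Xᵀ * Y) := by
  rw [← trace_transpose, transpose_mul, transpose_transpose]

lemma trace_mul_nonneg [DecidableEq n] {M N : Matrix n n ℝ} (hM : 0 ≤ M) (hN : 0 ≤ N) :
    0 ≤ trace (M * N) := by
  obtain ⟨X, rfl⟩ := CStarAlgebra.nonneg_iff_eq_star_mul_self.mp hN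
  rw [← Matrix.mul_assoc, trace_mul_comm, ← Matrix.mul_assoc, star_eq_conjTranspose,
    conjTranspose_eq_transpose_of_trivial]
  exact trace_mul_mul_transpose_nonneg hM X

lemma trace_mul_mul_transpose_sq_bounds [DecidableEq m] [DecidableEq n] {A : Matrix n n ℝ} {γ Γ : ℝ}
    (hA : 0 ≤ A) (hγ : algebraMap ℝ _ γ ≤ A) (hΓ : A ≤ algebraMap ℝ _ Γ) (X : Matrix m n ℝ) :
    γ * trace (X * A * Xᵀ) ≤ trace (X * (A * A) * Xᵀ) ∧
      trace (X * (A * A) * Xᵀ) ≤ Γ * trace (X * A * Xᵀ) := by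
  have hsmul (c : ℝ) : trace (X * (c • A) * Xᵀ) = c * trace (X * A * Xᵀ) := by
    rw [Matrix.mul_smul, Matrix.smul_mul, trace_smul, smul_eq_mul]
  refine ⟨?_, ?_⟩
  · rw [← hsmul]
    exact trace_mul_mul_transpose_mono (smul_le_mul_self_of_algebraMap_le hA hγ) X
  · rw [← hsmul]
    exact trace_mul_mul_transpose_mono (mul_self_le_smul_of_le_algebraMap hA hΓ) X

end Matrix

lemma algebraMap_le_of_le_eigMin {n : ℕ} {M : Matrix (Fin n) (Fin n) ℝ} (hM : M.IsHermitian)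
    {c : ℝ} (h : c ≤ eigMin M) : algebraMap ℝ _ c ≤ M := by
  refine algebraMap_le_of_le_spectrum (fun x hx ↦ ?_) hM
  obtain ⟨i, rfl⟩ := hM.spectrum_real_eq_range_eigenvalues ▸ hx
  rw [eigMin, dif_pos hM] at h
  exact h.trans (ciInf_le (Finite.bddBelow_range _) i)

lemma le_algebraMap_of_eigMax_le {n : ℕ} {M : Matrix (Fin n) (Fin n) ℝ} (hM : M.IsHermitian)
    {c : ℝ} (h : eigMax M ≤ c) : M ≤ algebraMap ℝ _ c := by
  refine le_algebraMap_of_spectrum_le (fun x hx ↦ ?_) hM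
  obtain ⟨i, rfl⟩ := hM.spectrum_real_eq_range_eigenvalues ▸ hx
  rw [eigMax, dif_pos hM] at h
  exact (le_ciSup (Finite.bddAbove_range _) i).trans h

lemma frobSq_nonneg {m n : ℕ} (X : Matrix (Fin m) (Fin n) ℝ) : 0 ≤ frobSq X := by
  simpa [frobSq, conjTranspose_eq_transpose_of_trivial] using
    (posSemidef_conjTranspose_mul_self X).trace_nonneg

lemma frobSq_transpose {m n : ℕ} (X : Matrix (Fin m) (Fin n) ℝ) : frobSq Xᵀ = frobSq X := by
  rw [frobSq, frobSq, transpose_transpose, trace_mul_comm]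

lemma frobSq_mul_symm {m n : ℕ} (X : Matrix (Fin m) (Fin n) ℝ) {A : Matrix (Fin n) (Fin n) ℝ}
    (hA : Aᵀ = A) : frobSq (X * A) = trace (X * (A * A) * Xᵀ) := by
  rw [frobSq, transpose_mul, hA, trace_mul_comm, Matrix.mul_assoc, Matrix.mul_assoc,
    Matrix.mul_assoc]

lemma frobSq_add {m n : ℕ} (X Y : Matrix (Fin m) (Fin n) ℝ) :
    frobSq (X + Y) = frobSq X + 2 * trace (Xᵀ * Y) + frobSq Y := by
  simp only [frobSq, transpose_add, Matrix.add_mul, Matrix.mul_add, trace_add,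
    trace_transpose_mul_comm X Y]
  ring

lemma frobSq_add_le {m n : ℕ} (X Y : Matrix (Fin m) (Fin n) ℝ) :
    frobSq (X + Y) ≤ 2 * (frobSq X + frobSq Y) := by
  have h := frobSq_nonneg (X - Y)
  simp only [frobSq, transpose_add, transpose_sub, Matrix.add_mul, Matrix.mul_add,
    Matrix.sub_mul, Matrix.mul_sub, trace_add, trace_sub, trace_transpose_mul_comm X Y] at h ⊢
  linarith

section Orthonormal

variable {p r k : ℕ} {U : Matrix (Fin p) (Fin r) ℝ} {Uperp : Matrix (Fin p) (Fin k) ℝ}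

lemma frobSq_mul_of_orthonormal (hU : Uᵀ * U = 1) {n : ℕ} (X : Matrix (Fin r) (Fin n) ℝ) :
    frobSq (U * X) = frobSq X := by
  rw [frobSq, transpose_mul, Matrix.mul_assoc, ← Matrix.mul_assoc Uᵀ, hU, Matrix.one_mul, frobSq]

lemma gram_add_of_orthonormal (hU : Uᵀ * U = 1) (hUperp : Uperpᵀ * Uperp = 1)
    (hUUperp : Uᵀ * Uperp = 0) {n : ℕ} (X : Matrix (Fin r) (Fin n) ℝ)
    (Y : Matrix (Fin k) (Fin n) ℝ) :
    (U * X + Uperp * Y)ᵀ * (U * X + Uperp * Y) = Xᵀ * X + Yᵀ * Y := by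
  have hUperpU : Uperpᵀ * U = 0 := by
    rw [← transpose_transpose U, ← transpose_mul, hUUperp, transpose_zero]
  simp only [transpose_add, transpose_mul, Matrix.add_mul, Matrix.mul_add, Matrix.mul_assoc,
    ← Matrix.mul_assoc Uᵀ, ← Matrix.mul_assoc Uperpᵀ, hU, hUperp, hUUperp, hUperpU,
    Matrix.one_mul, Matrix.zero_mul, Matrix.mul_zero, add_zero, zero_add]

lemma frobSq_add_of_orthonormal (hU : Uᵀ * U = 1) (hUperp : Uperpᵀ * Uperp = 1)
    (hUUperp : Uᵀ * Uperp = 0) {n : ℕ} (X : Matrix (Fin r) (Fin n) ℝ)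
    (Y : Matrix (Fin k) (Fin n) ℝ) :
    frobSq (U * X + Uperp * Y) = frobSq X + frobSq Y := by
  rw [frobSq, gram_add_of_orthonormal hU hUperp hUUperp, trace_add, frobSq, frobSq]

lemma trace_conj_add_of_orthonormal (hU : Uᵀ * U = 1) (hUperp : Uperpᵀ * Uperp = 1)
    (hUUperp : Uᵀ * Uperp = 0) {n : ℕ} (X : Matrix (Fin r) (Fin n) ℝ)
    (Y : Matrix (Fin k) (Fin n) ℝ) (C : Matrix (Fin n) (Fin n) ℝ) :
    trace ((U * X + Uperp * Y) * C * (U * X + Uperp * Y)ᵀ)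
      = trace (X * C * Xᵀ) + trace (Y * C * Yᵀ) := by
  rw [trace_mul_cycle, gram_add_of_orthonormal hU hUperp hUUperp, Matrix.add_mul, trace_add,
    trace_mul_cycle X, trace_mul_cycle Y]

end Orthonormal

section LoewnerBounds

variable {r : ℕ} {γ Γ : ℝ} {A B : Matrix (Fin r) (Fin r) ℝ}

lemma frobSq_mul_add_mul_bounds (hA : 0 ≤ A) (hB : 0 ≤ B)
    (hγA : algebraMap ℝ _ γ ≤ A) (hΓA : A ≤ algebraMap ℝ _ Γ)
    (hγB : algebraMap ℝ _ γ ≤ B) (hΓB : B ≤ algebraMap ℝ _ Γ) (S : Matrix (Fin r) (Fin r) ℝ) :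
    γ * (trace (S * A * Sᵀ) + trace (Sᵀ * B * S)) ≤ frobSq (B * S + S * A) ∧
      frobSq (B * S + S * A) ≤ 2 * Γ * (trace (S * A * Sᵀ) + trace (Sᵀ * B * S)) := by
  obtain ⟨hA₁, hA₂⟩ := trace_mul_mul_transpose_sq_bounds hA hγA hΓA S
  obtain ⟨hB₁, hB₂⟩ := trace_mul_mul_transpose_sq_bounds hB hγB hΓB Sᵀ
  rw [transpose_transpose] at hB₁ hB₂
  have hSA : frobSq (S * A) = trace (S * (A * A) * Sᵀ) :=
    frobSq_mul_symm S (transpose_eq_of_nonneg hA)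
  have hBS : frobSq (B * S) = trace (Sᵀ * (B * B) * S) := by
    rw [← frobSq_transpose, transpose_mul, transpose_eq_of_nonneg hB,
      frobSq_mul_symm _ (transpose_eq_of_nonneg hB), transpose_transpose]
  have hcross : 0 ≤ trace ((B * S)ᵀ * (S * A)) := by
    rw [transpose_mul, transpose_eq_of_nonneg hB, ← Matrix.mul_assoc]
    exact trace_mul_nonneg (by simpa using mul_mul_transpose_nonneg hB Sᵀ) hA
  constructor
  · rw [frobSq_add, hBS, hSA]
    linarith
  · calc frobSq (B * S + S * A) ≤ 2 * (frobSq (B * S) + frobSq (S * A)) := frobSq_add_le _ _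
      _ ≤ _ := by rw [hBS, hSA]; linarith

lemma frobSq_bounds_of_inv {k : ℕ} (hA : 0 ≤ A) (hAu : IsUnit A)
    (hγ : algebraMap ℝ _ γ ≤ A) (hΓ : A ≤ algebraMap ℝ _ Γ) (D : Matrix (Fin k) (Fin r) ℝ) :
    γ * trace (D * A⁻¹ * Dᵀ) ≤ frobSq D ∧ frobSq D ≤ Γ * trace (D * A⁻¹ * Dᵀ) := by
  have hAd : IsUnit A.det := (isUnit_iff_isUnit_det A).mp hAu
  have hAit : (A⁻¹)ᵀ = A⁻¹ := by rw [transpose_nonsing_inv, transpose_eq_of_nonneg hA]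
  have h₁ : D * A⁻¹ * A * (D * A⁻¹)ᵀ = D * A⁻¹ * Dᵀ := by
    rw [Matrix.mul_assoc D, nonsing_inv_mul _ hAd, Matrix.mul_one, transpose_mul, hAit,
      Matrix.mul_assoc]
  have h₂ : D * A⁻¹ * (A * A) * (D * A⁻¹)ᵀ = D * Dᵀ := by
    rw [transpose_mul, hAit]
    simp only [Matrix.mul_assoc]
    rw [← Matrix.mul_assoc A⁻¹ A, nonsing_inv_mul _ hAd, Matrix.one_mul,
      ← Matrix.mul_assoc A A⁻¹, mul_nonsing_inv _ hAd, Matrix.one_mul]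
  have := trace_mul_mul_transpose_sq_bounds hA hγ hΓ (D * A⁻¹)
  rwa [h₁, h₂, trace_mul_comm D, ← frobSq] at this

end LoewnerBounds

lemma isUnit_mul_inv_mul_transpose {r : ℕ} {W P : Matrix (Fin r) (Fin r) ℝ} (hW : W.PosDef)
    (hP : IsUnit P) : IsUnit (P * W⁻¹ * Pᵀ) :=
  (hP.mul hW.inv.isUnit).mul ((isUnit_transpose P).mpr hP)

lemma trace_mul_transpose_mul_lift {p r k : ℕ} {U : Matrix (Fin p) (Fin r) ℝ}
    {Uperp : Matrix (Fin p) (Fin k) ℝ} {W P : Matrix (Fin r) (Fin r) ℝ} (hW : W.PosDef)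
    (hP : IsUnit P) (hU : Uᵀ * U = 1) (hUperp : Uperpᵀ * Uperp = 1) (hUUperp : Uᵀ * Uperp = 0)
    (S : Matrix (Fin r) (Fin r) ℝ) (D : Matrix (Fin k) (Fin r) ℝ) :
    trace (W * ((U * S * P * W⁻¹ * Pᵀ + Uperp * D) * (P⁻¹)ᵀ)ᵀ
        * ((U * S * P * W⁻¹ * Pᵀ + Uperp * D) * (P⁻¹)ᵀ))
      = trace (S * (P * W⁻¹ * Pᵀ) * Sᵀ) + trace (D * (P * W⁻¹ * Pᵀ)⁻¹ * Dᵀ) := by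
  have hAd := (isUnit_iff_isUnit_det _).mp (isUnit_mul_inv_mul_transpose hW hP)
  have hAt := transpose_eq_of_nonneg (mul_mul_transpose_nonneg hW.inv.posSemidef.nonneg P)
  set A := P * W⁻¹ * Pᵀ with hA
  have hAinv : A⁻¹ = (P⁻¹)ᵀ * W * P⁻¹ := by
    rw [hA, Matrix.mul_inv_rev, Matrix.mul_inv_rev, nonsing_inv_nonsing_inv W
      ((isUnit_iff_isUnit_det W).mp hW.isUnit), ← transpose_nonsing_inv, Matrix.mul_assoc]
  have hlift : U * S * P * W⁻¹ * Pᵀ = U * (S * A) := by simp only [hA, Matrix.mul_assoc]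
  rw [hlift]
  set M := U * (S * A) + Uperp * D
  have hreweight : trace (W * (M * (P⁻¹)ᵀ)ᵀ * (M * (P⁻¹)ᵀ)) = trace (M * A⁻¹ * Mᵀ) := by
    rw [hAinv, transpose_mul, transpose_transpose, trace_mul_comm]
    simp only [Matrix.mul_assoc]
  rw [hreweight, trace_conj_add_of_orthonormal hU hUperp hUUperp, transpose_mul, hAt,
    Matrix.mul_assoc S A A⁻¹, mul_nonsing_inv _ hAd, Matrix.mul_one,
    ← Matrix.mul_assoc]

lemma frobSq_lift_sum {p q r k l : ℕ} {U : Matrix (Fin p) (Fin r) ℝ}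
    {Uperp : Matrix (Fin p) (Fin k) ℝ} {V₀ : Matrix (Fin q) (Fin r) ℝ}
    {V₀perp : Matrix (Fin q) (Fin l) ℝ} {V W P₁ P₂ : Matrix (Fin r) (Fin r) ℝ}
    (hU : Uᵀ * U = 1) (hUperp : Uperpᵀ * Uperp = 1) (hUUperp : Uᵀ * Uperp = 0)
    (hV₀ : V₀ᵀ * V₀ = 1) (hV₀perp : V₀perpᵀ * V₀perp = 1) (hV₀V₀perp : V₀ᵀ * V₀perp = 0)
    (hV : Vᵀ = V) (hP₁ : IsUnit P₁) (hP₂ : IsUnit P₂) (S : Matrix (Fin r) (Fin r) ℝ)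
    (D₁ : Matrix (Fin k) (Fin r) ℝ) (D₂ : Matrix (Fin l) (Fin r) ℝ) :
    frobSq (U * P₁ * ((V₀ * Sᵀ * P₁ * V⁻¹ * P₁ᵀ + V₀perp * D₂) * (P₁⁻¹)ᵀ)ᵀ
        + (U * S * P₂ * W⁻¹ * P₂ᵀ + Uperp * D₁) * (P₂⁻¹)ᵀ * (V₀ * P₂)ᵀ)
      = frobSq (P₁ * V⁻¹ * P₁ᵀ * S + S * (P₂ * W⁻¹ * P₂ᵀ)) + frobSq D₂ + frobSq D₁ := by
  have hP₁P₁ {n : ℕ} (X : Matrix (Fin r) (Fin n) ℝ) : P₁ * (P₁⁻¹ * X) = X := by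
    rw [← Matrix.mul_assoc, mul_nonsing_inv _ ((isUnit_iff_isUnit_det P₁).mp hP₁),
      Matrix.one_mul]
  have hP₂P₂ {n : ℕ} (X : Matrix (Fin r) (Fin n) ℝ) : (P₂⁻¹)ᵀ * (P₂ᵀ * X) = X := by
    rw [← Matrix.mul_assoc, ← transpose_mul,
      mul_nonsing_inv _ ((isUnit_iff_isUnit_det P₂).mp hP₂), transpose_one, Matrix.one_mul]
  have hVinv : (V⁻¹)ᵀ = V⁻¹ := by rw [transpose_nonsing_inv, hV]
  have hsplit : U * P₁ * ((V₀ * Sᵀ * P₁ * V⁻¹ * P₁ᵀ + V₀perp * D₂) * (P₁⁻¹)ᵀ)ᵀ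
        + (U * S * P₂ * W⁻¹ * P₂ᵀ + Uperp * D₁) * (P₂⁻¹)ᵀ * (V₀ * P₂)ᵀ
      = U * (V₀ * (P₁ * V⁻¹ * P₁ᵀ * S + S * (P₂ * W⁻¹ * P₂ᵀ))ᵀ + V₀perp * D₂)ᵀ
        + Uperp * (V₀ * D₁ᵀ)ᵀ := by
    simp only [transpose_add, transpose_mul, transpose_transpose, hVinv, Matrix.mul_add,
      Matrix.add_mul, Matrix.mul_assoc, hP₁P₁, hP₂P₂]
    abel
  rw [hsplit, frobSq_add_of_orthonormal hU hUperp hUUperp, frobSq_transpose,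
    frobSq_add_of_orthonormal hV₀ hV₀perp hV₀V₀perp, frobSq_transpose, frobSq_transpose,
    frobSq_mul_of_orthonormal hV₀, frobSq_transpose]

/-- Spectrum bounds for the map `(θ_L, θ_R) ↦ Lθ_Rᵀ + θ_LRᵀ` on the horizontal space of the
full-rank quotient geometry on fixed-rank matrices: `γ·g ≤ ‖Lθ_Rᵀ + θ_LRᵀ‖_F² ≤ 2Γ·g`. -/
theorem stmt12 {p₁ p₂ r : ℕ}
    (W V : Matrix (Fin r) (Fin r) ℝ) (hW : W.PosDef) (hV : V.PosDef)
    (U : Matrix (Fin p₁) (Fin r) ℝ) (Uperp : Matrix (Fin p₁) (Fin (p₁ - r)) ℝ)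
    (hU : Uᵀ * U = 1) (hUperp : Uperpᵀ * Uperp = 1) (hUUperp : Uᵀ * Uperp = 0)
    (V₀ : Matrix (Fin p₂) (Fin r) ℝ) (V₀perp : Matrix (Fin p₂) (Fin (p₂ - r)) ℝ)
    (hV₀ : V₀ᵀ * V₀ = 1) (hV₀perp : V₀perpᵀ * V₀perp = 1) (hV₀V₀perp : V₀ᵀ * V₀perp = 0)
    (P₁ P₂ : Matrix (Fin r) (Fin r) ℝ) (hP₁ : IsUnit P₁) (hP₂ : IsUnit P₂)
    (L : Matrix (Fin p₁) (Fin r) ℝ) (hL : L = U * P₁)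
    (R : Matrix (Fin p₂) (Fin r) ℝ) (hR : R = V₀ * P₂)
    (S : Matrix (Fin r) (Fin r) ℝ)
    (D₁ : Matrix (Fin (p₁ - r)) (Fin r) ℝ) (D₂ : Matrix (Fin (p₂ - r)) (Fin r) ℝ)
    (θL : Matrix (Fin p₁) (Fin r) ℝ)
    (hθL : θL = (U * S * P₂ * W⁻¹ * P₂ᵀ + Uperp * D₁) * (P₂⁻¹)ᵀ)
    (θR : Matrix (Fin p₂) (Fin r) ℝ)
    (hθR : θR = (V₀ * Sᵀ * P₁ * V⁻¹ * P₁ᵀ + V₀perp * D₂) * (P₁⁻¹)ᵀ)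
    (g : ℝ) (hg : g = Matrix.trace (W * θLᵀ * θL) + Matrix.trace (V * θRᵀ * θR))
    (γ Γ : ℝ)
    (hγ : γ = min (eigMin (P₂ * W⁻¹ * P₂ᵀ)) (eigMin (P₁ * V⁻¹ * P₁ᵀ)))
    (hΓ : Γ = max (eigMax (P₂ * W⁻¹ * P₂ᵀ)) (eigMax (P₁ * V⁻¹ * P₁ᵀ))) :
    γ * g ≤ frobSq (L * θRᵀ + θL * Rᵀ) ∧
    frobSq (L * θRᵀ + θL * Rᵀ) ≤ 2 * Γ * g := by
  have hA : 0 ≤ P₂ * W⁻¹ * P₂ᵀ := mul_mul_transpose_nonneg hW.inv.posSemidef.nonneg P₂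
  have hB : 0 ≤ P₁ * V⁻¹ * P₁ᵀ := mul_mul_transpose_nonneg hV.inv.posSemidef.nonneg P₁
  have hγA := algebraMap_le_of_le_eigMin hA.posSemidef.isHermitian (hγ ▸ min_le_left _ _)
  have hγB := algebraMap_le_of_le_eigMin hB.posSemidef.isHermitian (hγ ▸ min_le_right _ _)
  have hΓA := le_algebraMap_of_eigMax_le hA.posSemidef.isHermitian (hΓ ▸ le_max_left _ _)
  have hΓB := le_algebraMap_of_eigMax_le hB.posSemidef.isHermitian (hΓ ▸ le_max_right _ _)
  obtain ⟨hS₁, hS₂⟩ := frobSq_mul_add_mul_bounds hA hB hγA hΓA hγB hΓB S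
  obtain ⟨hD₁₁, hD₁₂⟩ := frobSq_bounds_of_inv hA (isUnit_mul_inv_mul_transpose hW hP₂) hγA hΓA D₁
  obtain ⟨hD₂₁, hD₂₂⟩ := frobSq_bounds_of_inv hB (isUnit_mul_inv_mul_transpose hV hP₁) hγB hΓB D₂
  have hD₁ := frobSq_nonneg D₁
  have hD₂ := frobSq_nonneg D₂
  rw [hg, hθL, hθR, trace_mul_transpose_mul_lift hW hP₂ hU hUperp hUUperp S D₁,
    trace_mul_transpose_mul_lift hV hP₁ hV₀ hV₀perp hV₀V₀perp Sᵀ D₂, transpose_transpose, hL, hR,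
    frobSq_lift_sum hU hUperp hUUperp hV₀ hV₀perp hV₀V₀perp
      (transpose_eq_of_nonneg hV.posSemidef.nonneg) hP₁ hP₂]
  constructor <;> linarith
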